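/- arXiv:2402.02345 — 7 statements merged into one kernel-verified Lean document; each statement's English description precedes it below -/
import Mathlib

section
/- Let d ≥ 1 and let s be a point of the unit sphere 𝕊^d ⊂ ℝ^{d+1} with s_{d+1} < 1. Then ‖h₁(φ(s))‖ = arccos(−s_{d+1}); in particular ‖h₁(φ(s))‖ < π, so the range of h₁ ∘ φ on 𝕊^d ∖ {s_n} is contained in the open ball of radius π centered at the origin of ℝ^d. -/
/-! Since `‖s[1:d]‖² = 1 - s_{d+1}²` on the sphere, `‖φ(s)‖² = (1 + s_{d+1})/(1 - s_{d+1})`, and the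
argument `(1 - ‖x‖²)/(1 + ‖x‖²)` of `arccos` in `h₁` then simplifies to `-s_{d+1}`. As `h₁` rescales `x`
to length `arccos(…)`, this is `‖h₁(φ(s))‖`, and `arccos y < π` exactly when `y > -1`. -/

open Real
open scoped RealInnerProductSpace

noncomputable section

/-- The first `d` coordinates of a point of `ℝ^{d+1}`, i.e. `s[1:d]`. -/
def stereoProj {d : ℕ} (s : EuclideanSpace ℝ (Fin (d + 1))) : EuclideanSpace ℝ (Fin d) :=
  WithLp.toLp 2 (fun i => s (Fin.castSucc i))

/-- The stereographic projection `φ(s) = s[1:d] / (1 - s_{d+1})`. -/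
def stereo {d : ℕ} (s : EuclideanSpace ℝ (Fin (d + 1))) : EuclideanSpace ℝ (Fin d) :=
  (1 - s (Fin.last d))⁻¹ • stereoProj s

open Classical in
/-- The map `h₁(x) = arccos((1 - ‖x‖²)/(1 + ‖x‖²)) • x/‖x‖` for `x ≠ 0`, `h₁(0) = 0`. -/
def h1 {d : ℕ} (x : EuclideanSpace ℝ (Fin d)) : EuclideanSpace ℝ (Fin d) :=
  if x = 0 then 0 else Real.arccos ((1 - ‖x‖ ^ 2) / (1 + ‖x‖ ^ 2)) • ‖x‖⁻¹ • x

/-- The north pole `s_n = (0, …, 0, 1)` of `𝕊^d ⊂ ℝ^{d+1}`. -/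
def northPole (d : ℕ) : EuclideanSpace ℝ (Fin (d + 1)) :=
  EuclideanSpace.single (Fin.last d) 1

/-- The south pole `s₀ = (0, …, 0, -1)` of `𝕊^d ⊂ ℝ^{d+1}`. -/
def southPole (d : ℕ) : EuclideanSpace ℝ (Fin (d + 1)) :=
  EuclideanSpace.single (Fin.last d) (-1)

end

lemma norm_stereoProj_sq {d : ℕ} (s : EuclideanSpace ℝ (Fin (d + 1))) :
    ‖stereoProj s‖ ^ 2 = ‖s‖ ^ 2 - s (Fin.last d) ^ 2 := by
  simp only [EuclideanSpace.norm_sq_eq, Fin.sum_univ_castSucc, stereoProj, Real.norm_eq_abs, sq_abs]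
  ring

lemma norm_stereo_sq {d : ℕ} {s : EuclideanSpace ℝ (Fin (d + 1))} (hs : ‖s‖ = 1)
    (hne : s (Fin.last d) ≠ 1) :
    ‖stereo s‖ ^ 2 = (1 + s (Fin.last d)) / (1 - s (Fin.last d)) := by
  have hsub : 1 - s (Fin.last d) ≠ 0 := sub_ne_zero.mpr hne.symm
  rw [stereo, norm_smul, mul_pow, norm_stereoProj_sq, hs, norm_inv, Real.norm_eq_abs, inv_pow, sq_abs]
  field_simp
  ring

lemma norm_h1 {d : ℕ} (x : EuclideanSpace ℝ (Fin d)) :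
    ‖h1 x‖ = Real.arccos ((1 - ‖x‖ ^ 2) / (1 + ‖x‖ ^ 2)) := by
  rcases eq_or_ne x 0 with rfl | hx
  · simp [h1]
  · rw [h1, if_neg hx, norm_smul, norm_smul, norm_inv, norm_norm,
      inv_mul_cancel₀ (norm_ne_zero_iff.mpr hx), mul_one, Real.norm_eq_abs,
      abs_of_nonneg (Real.arccos_nonneg _)]

lemma norm_h1_stereo {d : ℕ} {s : EuclideanSpace ℝ (Fin (d + 1))} (hs : ‖s‖ = 1)
    (hne : s (Fin.last d) ≠ 1) :
    ‖h1 (stereo s)‖ = Real.arccos (-s (Fin.last d)) := by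
  have hsub : 1 - s (Fin.last d) ≠ 0 := sub_ne_zero.mpr hne.symm
  rw [norm_h1, norm_stereo_sq hs hne]
  congr 1
  field_simp
  ring

theorem stmt2_general {d : ℕ} (s : EuclideanSpace ℝ (Fin (d + 1)))
    (hs : ‖s‖ = 1) (hlt : s (Fin.last d) < 1) :
    ‖h1 (stereo s)‖ = Real.arccos (-(s (Fin.last d))) ∧ ‖h1 (stereo s)‖ < π ∧
      h1 (stereo s) ∈ Metric.ball (0 : EuclideanSpace ℝ (Fin d)) π := by
  have hnorm := norm_h1_stereo hs hlt.ne
  have hπ : ‖h1 (stereo s)‖ < π := hnorm ▸ Real.arccos_lt_pi.mpr (by linarith)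
  exact ⟨hnorm, hπ, mem_ball_zero_iff.mpr hπ⟩

/-- for `s ∈ 𝕊^d` with `s_{d+1} < 1`, `‖h₁(φ(s))‖ = arccos(-s_{d+1}) < π`;
in particular `h₁(φ(s))` lies in the open ball of radius `π` centered at the origin. -/
theorem stmt2 {d : ℕ} (hd : 1 ≤ d) (s : EuclideanSpace ℝ (Fin (d + 1)))
    (hs : ‖s‖ = 1) (hlt : s (Fin.last d) < 1) :
    ‖h1 (stereo s)‖ = Real.arccos (-(s (Fin.last d))) ∧ ‖h1 (stereo s)‖ < π ∧
      h1 (stereo s) ∈ Metric.ball (0 : EuclideanSpace ℝ (Fin d)) π :=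
  stmt2_general s hs hlt
end

section
/- Let d ≥ 1 and let θ₁, θ₂ ∈ (−3π/2, π/2). Define s_i = (cos θ_i, 0, …, 0, sin θ_i) ∈ 𝕊^d ⊂ ℝ^{d+1} for i = 1, 2 (first coordinate cos θ_i, last coordinate sin θ_i, all other coordinates zero). Then ‖h₁(φ(s₁)) − h₁(φ(s₂))‖ = |θ₁ − θ₂|, and arccos(⟨s₁, s₂⟩) = min( ‖h₁(φ(s₁)) − h₁(φ(s₂))‖ , 2π − ‖h₁(φ(s₁)) − h₁(φ(s₂))‖ ). (These points s₁, s₂ lie on the great circle through the north pole s_n and the south pole s₀.) -/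
open Real
open scoped RealInnerProductSpace

/-! On the meridian, the half-angle formula gives `φ(cos θ, 0, …, 0, sin θ) = tan (θ/2 + π/4) • e₁`,
and on a coordinate axis `h₁` acts as `c ↦ 2 arctan c`, because
`arccos ((1 - c²)/(1 + c²)) = 2 arctan c` for `c ≥ 0`. So `h₁ ∘ φ` maps the point of angle `θ`
to `(θ + π/2) • e₁`, isometrically. The great-circle distance is `arccos (cos (θ₁ - θ₂))`, which
folds `|θ₁ - θ₂| < 2π` back into `[0, π]`. -/

open EuclideanSpace

lemma arccos_one_sub_sq_div_one_add_sq {c : ℝ} (hc : 0 ≤ c) :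
    arccos ((1 - c ^ 2) / (1 + c ^ 2)) = 2 * arctan c := by
  have hcos : cos (2 * arctan c) = (1 - c ^ 2) / (1 + c ^ 2) := by
    rw [cos_two_mul, cos_sq_arctan]
    field_simp
    ring
  rw [← hcos, arccos_cos] <;>
    linarith [arctan_nonneg.mpr hc, arctan_lt_pi_div_two c]

lemma h1_eq_smul {d : ℕ} (x : EuclideanSpace ℝ (Fin d)) :
    h1 x = (2 * arctan ‖x‖ / ‖x‖) • x := by
  rcases eq_or_ne x 0 with rfl | hx
  · simp [h1]
  · rw [h1, if_neg hx, arccos_one_sub_sq_div_one_add_sq (norm_nonneg x), smul_smul, div_eq_mul_inv]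

lemma h1_single {d : ℕ} (i : Fin d) (c : ℝ) :
    h1 (single i c) = single i (2 * arctan c) := by
  have hscale : 2 * arctan |c| / |c| * c = 2 * arctan c := by
    rcases eq_or_ne c 0 with rfl | hc
    · simp
    rcases abs_choice c with h | h <;> rw [h]
    · field_simp
    · rw [arctan_neg]; field_simp
  ext j
  rw [h1_eq_smul, PiLp.norm_single, Real.norm_eq_abs, PiLp.smul_apply, PiLp.single_apply,
    PiLp.single_apply]
  split_ifs <;> simp [hscale]

lemma two_mul_arctan_cos_div_one_sub_sin {θ : ℝ} (h₁ : -(3 * π / 2) < θ) (h₂ : θ < π / 2) :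
    2 * arctan (cos θ / (1 - sin θ)) = θ + π / 2 := by
  set t := θ / 2 + π / 4
  have hθ : θ = 2 * t - π / 2 := by ring
  have ht₁ : -(π / 2) < t := by linarith
  have ht₂ : t < π / 2 := by linarith
  have hcos : 0 < cos t := cos_pos_of_mem_Ioo ⟨ht₁, ht₂⟩
  have htan : cos θ / (1 - sin θ) = tan t := by
    rw [hθ, cos_sub_pi_div_two, sin_sub_pi_div_two, cos_two_mul, sin_two_mul, tan_eq_sin_div_cos]
    field_simp
    ring
  rw [htan, arctan_tan ht₁ ht₂]
  ring

lemma stereo_single_zero_add_single_last {d : ℕ} [NeZero d] (a b : ℝ) :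
    stereo (single 0 a + single (Fin.last d) b) = single 0 (a / (1 - b)) := by
  ext i
  simp [stereo, stereoProj, Fin.castSucc_ne_last, div_eq_inv_mul, NeZero.ne d]

lemma inner_single_add_single_of_ne {ι : Type*} [Fintype ι] [DecidableEq ι] {i j : ι}
    (hij : i ≠ j) (a b a' b' : ℝ) :
    ⟪single i a + single j b, single i a' + single j b'⟫ = a * a' + b * b' := by
  simp [inner_add_left, inner_add_right, inner_single_left, hij, hij.symm]

lemma arccos_cos_eq_min_abs {x : ℝ} (hx : |x| ≤ 2 * π) :
    arccos (cos x) = min |x| (2 * π - |x|) := by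
  rw [← cos_abs]
  rcases le_total |x| π with h | h
  · rw [arccos_cos (abs_nonneg x) h, min_eq_left (by linarith)]
  · rw [← cos_two_pi_sub, arccos_cos (by linarith) (by linarith), min_eq_right (by linarith)]

/-- for points `sᵢ = (cos θᵢ, 0, …, 0, sin θᵢ)` on the meridian through the
poles, with `θᵢ ∈ (-3π/2, π/2)`, one has `‖h₁(φ(s₁)) - h₁(φ(s₂))‖ = |θ₁ - θ₂|` and
`arccos ⟨s₁, s₂⟩ = min(‖h₁(φ(s₁)) - h₁(φ(s₂))‖, 2π - ‖h₁(φ(s₁)) - h₁(φ(s₂))‖)`. -/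
theorem stmt3 {d : ℕ} (hd : 1 ≤ d) (θ₁ θ₂ : ℝ)
    (hθ₁ : θ₁ ∈ Set.Ioo (-(3 * π / 2)) (π / 2))
    (hθ₂ : θ₂ ∈ Set.Ioo (-(3 * π / 2)) (π / 2))
    (s₁ s₂ : EuclideanSpace ℝ (Fin (d + 1)))
    (hs₁ : s₁ = EuclideanSpace.single (0 : Fin (d + 1)) (Real.cos θ₁)
        + EuclideanSpace.single (Fin.last d) (Real.sin θ₁))
    (hs₂ : s₂ = EuclideanSpace.single (0 : Fin (d + 1)) (Real.cos θ₂)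
        + EuclideanSpace.single (Fin.last d) (Real.sin θ₂)) :
    ‖h1 (stereo s₁) - h1 (stereo s₂)‖ = |θ₁ - θ₂| ∧
      Real.arccos ⟪s₁, s₂⟫ =
        min (‖h1 (stereo s₁) - h1 (stereo s₂)‖)
          (2 * π - ‖h1 (stereo s₁) - h1 (stereo s₂)‖) := by
  have : NeZero d := ⟨by omega⟩
  have h1_stereo : ∀ θ ∈ Set.Ioo (-(3 * π / 2)) (π / 2),
      h1 (stereo (single 0 (cos θ) + single (Fin.last d) (sin θ))) = single 0 (θ + π / 2) :=
    fun θ hθ => by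
      rw [stereo_single_zero_add_single_last, h1_single,
        two_mul_arctan_cos_div_one_sub_sin hθ.1 hθ.2]
  have hdist : ‖h1 (stereo s₁) - h1 (stereo s₂)‖ = |θ₁ - θ₂| := by
    rw [hs₁, hs₂, h1_stereo θ₁ hθ₁, h1_stereo θ₂ hθ₂, ← PiLp.single_sub, PiLp.norm_single,
      Real.norm_eq_abs, add_sub_add_right_eq_sub]
  refine ⟨hdist, ?_⟩
  rw [hdist, hs₁, hs₂, inner_single_add_single_of_ne Fin.last_pos'.ne, ← cos_sub]
  exact arccos_cos_eq_min_abs <|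
    abs_le.mpr ⟨by linarith [hθ₁.1, hθ₂.2], by linarith [hθ₁.2, hθ₂.1]⟩
end

section
/- For all real numbers α ∈ [−π/2, π/2] and β ∈ [0, π], one has arccos( cos²(α)·cos(β) + sin²(α) ) ≤ 2·(α + π/2)·sin(β/2). -/
open Real

lemma arccos_antitone : Antitone Real.arccos := fun x y h => by
  unfold Real.arccos
  have := Real.monotone_arcsin h
  linarith

/-- for `α ∈ [-π/2, π/2]` and `β ∈ [0, π]`,
`arccos(cos²α · cos β + sin²α) ≤ 2(α + π/2) · sin(β/2)`. -/
theorem stmt6 (α β : ℝ) (hα : α ∈ Set.Icc (-(π / 2)) (π / 2)) (hβ : β ∈ Set.Icc 0 π) :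
    Real.arccos (Real.cos α ^ 2 * Real.cos β + Real.sin α ^ 2) ≤
      2 * (α + π / 2) * Real.sin (β / 2) := by
  obtain ⟨hα1, hα2⟩ := hα
  obtain ⟨hβ1, hβ2⟩ := hβ
  have hπ := Real.pi_pos
  set s := Real.sin (β / 2) with hs
  set t := α + π / 2 with ht
  have ht0 : 0 ≤ t := by simp [ht]; linarith
  have htπ : t ≤ π := by simp [ht]; linarith
  have hs0 : 0 ≤ s := Real.sin_nonneg_of_nonneg_of_le_pi (by linarith) (by linarith)
  have hs1 : s ≤ 1 := Real.sin_le_one _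
  have hct : Real.cos α = Real.sin t := by
    rw [ht, Real.sin_add]; simp
  have hcβ : Real.cos β = 1 - 2 * s ^ 2 := by
    have : β = 2 * (β / 2) := by ring
    rw [this, Real.cos_two_mul, ← Real.sin_sq_add_cos_sq (β / 2), hs]; ring
  have hpyth := Real.sin_sq_add_cos_sq α
  have key : Real.cos α ^ 2 * Real.cos β + Real.sin α ^ 2
      = 1 - 2 * (Real.sin t * s) ^ 2 := by
    rw [hcβ, ← hct]; nlinarith [hpyth]
  rw [key]
  by_cases hc : 2 * t * s ≤ π
  · -- main case
    have hst0 : 0 ≤ Real.sin t := Real.sin_nonneg_of_nonneg_of_le_pi ht0 htπ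
    -- concavity: s * sin t ≤ sin (s * t)
    have hconc : s * Real.sin t ≤ Real.sin (s * t) := by
      have h := strictConcaveOn_sin_Icc.concaveOn
      have := h.2 (show (0:ℝ) ∈ Set.Icc 0 π from ⟨le_rfl, hπ.le⟩)
        (show t ∈ Set.Icc 0 π from ⟨ht0, htπ⟩)
        (show (0:ℝ) ≤ 1 - s by linarith) hs0 (by ring)
      simpa using this
    have hts0 : 0 ≤ t * s := mul_nonneg ht0 hs0
    have hcos : Real.cos (2 * (t * s)) ≤ 1 - 2 * (Real.sin t * s) ^ 2 := by
      rw [Real.cos_two_mul, ← Real.sin_sq_add_cos_sq (t * s)]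
      have h1 : s * Real.sin t ≤ Real.sin (t * s) := by
        rw [mul_comm t s]; exact hconc
      nlinarith [mul_nonneg hs0 hst0]
    calc Real.arccos (1 - 2 * (Real.sin t * s) ^ 2)
        ≤ Real.arccos (Real.cos (2 * (t * s))) := arccos_antitone hcos
      _ = 2 * (t * s) := Real.arccos_cos (by linarith) (by linarith)
      _ = 2 * t * s := by ring
  · -- trivial case
    have := Real.arccos_le_pi (1 - 2 * (Real.sin t * s) ^ 2)
    linarith
end

section
/- For all real numbers α ∈ [−π/2, π/2] and β ∈ [0, π], one has arccos( cos²(α)·cos(β) + sin²(α) ) ≤ 2π − 2·(α + π/2)·sin(β/2). -/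
open Real

/-- for `α ∈ [-π/2, π/2]` and `β ∈ [0, π]`,
`arccos(cos²α · cos β + sin²α) ≤ 2π - 2(α + π/2) · sin(β/2)`. -/
theorem stmt7 (α β : ℝ) (hα : α ∈ Set.Icc (-(π / 2)) (π / 2)) (hβ : β ∈ Set.Icc 0 π) :
    Real.arccos (Real.cos α ^ 2 * Real.cos β + Real.sin α ^ 2) ≤
      2 * π - 2 * (α + π / 2) * Real.sin (β / 2) := by
  obtain ⟨hα1, hα2⟩ := hα
  obtain ⟨hβ1, hβ2⟩ := hβ
  have hπ := Real.pi_pos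
  set s := Real.sin (β / 2) with hs_def
  have hs0 : 0 ≤ s := Real.sin_nonneg_of_nonneg_of_le_pi (by linarith) (by linarith)
  have hs1 : s ≤ 1 := Real.sin_le_one _
  have hc0 : 0 ≤ Real.cos α := Real.cos_nonneg_of_mem_Icc ⟨hα1, hα2⟩
  have hc1 : Real.cos α ≤ 1 := Real.cos_le_one _
  set x := Real.cos α * s with hx_def
  have hx0 : 0 ≤ x := mul_nonneg hc0 hs0
  have hx1 : x ≤ 1 := by nlinarith
  -- rewrite the argument of arccos
  have hcosβ : Real.cos β = 1 - 2 * s ^ 2 := by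
    have h1 : Real.cos β = Real.cos (2 * (β / 2)) := by ring_nf
    rw [h1, Real.cos_two_mul']
    have h2 := Real.sin_sq_add_cos_sq (β / 2)
    nlinarith
  have harg : Real.cos α ^ 2 * Real.cos β + Real.sin α ^ 2 = 1 - 2 * x ^ 2 := by
    have h2 := Real.sin_sq_add_cos_sq α
    rw [hcosβ]; ring_nf; nlinarith
  have hcos2 : Real.cos (2 * Real.arcsin x) = 1 - 2 * x ^ 2 := by
    have h2 := Real.sin_sq_add_cos_sq (Real.arcsin x)
    rw [Real.cos_two_mul']; rw [Real.sin_arcsin (by linarith) hx1] at h2 ⊢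
    nlinarith
  have harcsin0 : 0 ≤ Real.arcsin x := Real.arcsin_nonneg.2 hx0
  have harcsinhalf : Real.arcsin x ≤ π / 2 := Real.arcsin_le_pi_div_two x
  have hkey : Real.arccos (Real.cos α ^ 2 * Real.cos β + Real.sin α ^ 2)
      = 2 * Real.arcsin x := by
    rw [harg, ← hcos2, Real.arccos_cos (by linarith) (by linarith)]
  rw [hkey]
  rcases le_or_gt α 0 with hneg | hpos
  · have : (α + π / 2) * s ≤ π / 2 := by nlinarith
    linarith
  · have hxc : x ≤ Real.cos α := by nlinarith
    have h1 : Real.arcsin x ≤ Real.arcsin (Real.cos α) :=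
      Real.monotone_arcsin hxc
    have h2 : Real.arcsin (Real.cos α) = π / 2 - α := by
      rw [← Real.sin_pi_div_two_sub α,
        Real.arcsin_sin (by linarith) (by linarith)]
    have h3 : (α + π / 2) * s ≤ α + π / 2 := by nlinarith
    linarith [h1, h2 ▸ h1]
end

section
/- For all real numbers α ∈ [−π/2, π/2] and β ∈ (0, π), one has arccos( sin(α)·(1 − cos(β)) / √( sin²(β) + sin²(α)·(1 − cos(β))² ) ) ≤ π/2 + β/2. (For β ∈ (0, π) the quantity under the square root is strictly positive.) -/
open Real

/-- for `α ∈ [-π/2, π/2]` and `β ∈ (0, π)`, the quantity under the square root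
is positive and `arccos( sin α (1 - cos β) / √(sin²β + sin²α (1 - cos β)²) ) ≤ π/2 + β/2`. -/
theorem stmt9 (α β : ℝ) (hα : α ∈ Set.Icc (-(π / 2)) (π / 2)) (hβ : β ∈ Set.Ioo 0 π) :
    0 < Real.sin β ^ 2 + Real.sin α ^ 2 * (1 - Real.cos β) ^ 2 ∧
      Real.arccos (Real.sin α * (1 - Real.cos β) /
          Real.sqrt (Real.sin β ^ 2 + Real.sin α ^ 2 * (1 - Real.cos β) ^ 2)) ≤
        π / 2 + β / 2 := by
  obtain ⟨hβ1, hβ2⟩ := hβ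
  have hsβ : 0 < Real.sin β := Real.sin_pos_of_pos_of_lt_pi hβ1 hβ2
  have hD : 0 < Real.sin β ^ 2 + Real.sin α ^ 2 * (1 - Real.cos β) ^ 2 := by positivity
  refine ⟨hD, ?_⟩
  set D := Real.sin β ^ 2 + Real.sin α ^ 2 * (1 - Real.cos β) ^ 2 with hDdef
  have hsq : 0 < Real.sqrt D := Real.sqrt_pos.mpr hD
  have hsqD : Real.sqrt D ^ 2 = D := Real.sq_sqrt hD.le
  have hh1 : 0 < Real.sin (β / 2) :=
    Real.sin_pos_of_pos_of_lt_pi (by linarith) (by linarith [Real.pi_pos])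
  have hh2 : Real.sin (β / 2) ≤ 1 := Real.sin_le_one _
  -- half-angle identities
  have hcos : Real.cos β = 1 - 2 * Real.sin (β / 2) ^ 2 := by
    have := Real.cos_two_mul (β / 2)
    have h2 : 2 * (β / 2) = β := by ring
    rw [h2] at this
    have hpyth := Real.sin_sq_add_cos_sq (β / 2)
    nlinarith
  have hsin : Real.sin β = 2 * Real.sin (β / 2) * Real.cos (β / 2) := by
    have := Real.sin_two_mul (β / 2)
    rw [show 2 * (β / 2) = β by ring] at this
    linarith
  have hpyth := Real.sin_sq_add_cos_sq (β / 2)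
  have hα1 : Real.sin α ^ 2 ≤ 1 := by nlinarith [Real.sin_sq_add_cos_sq α, sq_nonneg (Real.cos α)]
  -- key numerator inequality: (sin α (1-cos β))² ≤ sin(β/2)² D
  have hkey2 : (Real.sin α * (1 - Real.cos β)) ^ 2 ≤ Real.sin (β / 2) ^ 2 * D := by
    rw [hDdef, hcos, hsin]
    nlinarith [mul_nonneg (mul_nonneg (sq_nonneg (Real.sin (β / 2) ^ 2))
      (sq_nonneg (Real.cos (β / 2)))) (sub_nonneg.mpr hα1), hpyth]
  -- hence numerator ≥ -sin(β/2)·√D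
  have hkey : -(Real.sin (β / 2)) * Real.sqrt D ≤ Real.sin α * (1 - Real.cos β) := by
    nlinarith [sq_nonneg (Real.sin α * (1 - Real.cos β) + Real.sin (β / 2) * Real.sqrt D),
      mul_pos hh1 hsq]
  have hxge : -(Real.sin (β / 2)) ≤ Real.sin α * (1 - Real.cos β) / Real.sqrt D := by
    rw [le_div_iff₀ hsq]
    linarith
  -- arccos is antitone
  calc Real.arccos (Real.sin α * (1 - Real.cos β) / Real.sqrt D)
      ≤ Real.arccos (-(Real.sin (β / 2))) := by
        unfold Real.arccos
        have := Real.monotone_arcsin hxge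
        linarith
    _ = π - Real.arccos (Real.sin (β / 2)) := Real.arccos_neg _
    _ = π / 2 + β / 2 := by
        rw [Real.arccos_eq_pi_div_two_sub_arcsin,
          Real.arcsin_sin (by linarith [Real.pi_pos]) (by linarith)]
        ring
end

section
/- Let d ≥ 1, let θ ∈ ℝ^d with ‖θ‖ = 1, and let t ∈ ℝ. Set u = t/√(t² + 1) (equivalently, u = sign(t)·√(t²/(t²+1))) and let s ∈ ℝ^{d+1} be the vector whose first d coordinates form √(1 − u²)·θ and whose last coordinate is u. Then s ∈ 𝕊^d, and for every x ∈ ℝ^d, ⟨x, θ⟩ = t if and only if ⟨ψ(x), s⟩ = u, where ψ(x) ∈ ℝ^{d+1} is the inverse stereographic map with first d coordinates (1 − u')·x and last coordinate u' = (‖x‖² − 1)/(‖x‖² + 1). In other words, every hyperplane { x ∈ ℝ^d : ⟨x, θ⟩ = t } is the stereographic image of a subsphere ζ₁^s = { s' ∈ 𝕊^d : ⟨s', s⟩ = s_{d+1} }. -/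
open Real
open scoped RealInnerProductSpace

/-- The point of `ℝ^{d+1}` whose first `d` coordinates form `x` and whose last
coordinate is `u`. -/
def append1 {d : ℕ} (x : EuclideanSpace ℝ (Fin d)) (u : ℝ) :
    EuclideanSpace ℝ (Fin (d + 1)) :=
  WithLp.toLp 2 (Fin.snoc (α := fun _ => ℝ) x.ofLp u)

/-- The inverse stereographic map `ψ(x) = ((1 - u')·x, u')` with
`u' = (‖x‖² - 1)/(‖x‖² + 1)`. -/
noncomputable def invStereo {d : ℕ} (x : EuclideanSpace ℝ (Fin d)) :
    EuclideanSpace ℝ (Fin (d + 1)) :=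
  append1 ((1 - (‖x‖ ^ 2 - 1) / (‖x‖ ^ 2 + 1)) • x) ((‖x‖ ^ 2 - 1) / (‖x‖ ^ 2 + 1))

/-! Writing `u'` for the last coordinate of `ψ(x)`, one has `1 - u' = 2 / (‖x‖² + 1) ≠ 0` and
`⟪ψ(x), (y, v)⟫ - v = (1 - u') (⟪x, y⟫ - v)`, so `ψ` maps each hyperplane `⟪x, y⟫ = v` into the
subsphere `⟪·, (y, v)⟫ = v`. For `s = (√(1 - u²) θ, u)` with `u = t / √(t² + 1)` one has
`√(1 - u²) = 1 / √(t² + 1)`, and the hyperplane `⟪x, √(1 - u²) θ⟫ = u` is `⟪x, θ⟫ = t`. -/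

lemma inner_append1 {d : ℕ} (a c : EuclideanSpace ℝ (Fin d)) (b e : ℝ) :
    ⟪append1 a b, append1 c e⟫ = ⟪a, c⟫ + b * e := by
  simp only [PiLp.inner_apply, RCLike.inner_apply, conj_trivial, append1,
    Fin.sum_univ_castSucc, Fin.snoc_castSucc, Fin.snoc_last]
  ring

lemma norm_append1_sqrt_one_sub_sq_smul {d : ℕ} {θ : EuclideanSpace ℝ (Fin d)} (hθ : ‖θ‖ = 1)
    {u : ℝ} (hu : u ^ 2 ≤ 1) : ‖append1 (√(1 - u ^ 2) • θ) u‖ = 1 := by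
  have hsq : ‖append1 (√(1 - u ^ 2) • θ) u‖ ^ 2 = 1 := by
    rw [← real_inner_self_eq_norm_sq, inner_append1, real_inner_smul_left, real_inner_smul_right,
      real_inner_self_eq_norm_sq, hθ, one_pow, mul_one, mul_self_sqrt (sub_nonneg.2 hu)]
    ring
  exact (pow_eq_one_iff_of_nonneg (norm_nonneg _) two_ne_zero).1 hsq

lemma inner_invStereo_append1_eq_iff {d : ℕ} (x y : EuclideanSpace ℝ (Fin d)) (v : ℝ) :
    ⟪invStereo x, append1 y v⟫ = v ↔ ⟪x, y⟫ = v := by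
  set u' := (‖x‖ ^ 2 - 1) / (‖x‖ ^ 2 + 1) with hu'
  have h_one_sub_ne : 1 - u' ≠ 0 := by
    rw [hu', one_sub_div (by positivity)]
    exact div_ne_zero (by norm_num) (by positivity)
  have key : ⟪invStereo x, append1 y v⟫ - v = (1 - u') * (⟪x, y⟫ - v) := by
    rw [invStereo, inner_append1, real_inner_smul_left]
    ring
  rw [← sub_eq_zero, key, mul_eq_zero, or_iff_right h_one_sub_ne, sub_eq_zero]

lemma one_sub_sq_div_sqrt_sq_add_one (t : ℝ) : 1 - (t / √(t ^ 2 + 1)) ^ 2 = (t ^ 2 + 1)⁻¹ := by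
  rw [div_pow, sq_sqrt (by positivity)]
  field_simp
  ring

theorem stmt11_general {d : ℕ} (θ : EuclideanSpace ℝ (Fin d)) (hθ : ‖θ‖ = 1) (t : ℝ)
    (u : ℝ) (hu : u = t / Real.sqrt (t ^ 2 + 1))
    (s : EuclideanSpace ℝ (Fin (d + 1)))
    (hsdef : s = append1 (Real.sqrt (1 - u ^ 2) • θ) u) :
    ‖s‖ = 1 ∧ ∀ x : EuclideanSpace ℝ (Fin d), ⟪x, θ⟫ = t ↔ ⟪invStereo x, s⟫ = u := by
  have h_one_sub : 1 - u ^ 2 = (t ^ 2 + 1)⁻¹ := hu ▸ one_sub_sq_div_sqrt_sq_add_one t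
  subst hsdef
  refine ⟨norm_append1_sqrt_one_sub_sq_smul hθ
    (sub_nonneg.1 (h_one_sub ▸ by positivity)), fun x => ?_⟩
  have hq : √(t ^ 2 + 1) ≠ 0 := by positivity
  rw [inner_invStereo_append1_eq_iff, real_inner_smul_right, h_one_sub, sqrt_inv, hu,
    div_eq_inv_mul, mul_right_inj' (inv_ne_zero hq)]

/-- given a unit vector `θ ∈ ℝ^d` and `t ∈ ℝ`, with `u = t/√(t² + 1)` and
`s = (√(1 - u²)·θ, u)`, the point `s` is on `𝕊^d` and for every `x ∈ ℝ^d`,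
`⟨x, θ⟩ = t ↔ ⟨ψ(x), s⟩ = u`; thus every hyperplane `{x : ⟨x, θ⟩ = t}` is the
stereographic image of the subsphere `ζ₁^s = {s' ∈ 𝕊^d : ⟨s', s⟩ = s_{d+1}}`. -/
theorem stmt11 {d : ℕ} (hd : 1 ≤ d) (θ : EuclideanSpace ℝ (Fin d)) (hθ : ‖θ‖ = 1) (t : ℝ)
    (u : ℝ) (hu : u = t / Real.sqrt (t ^ 2 + 1))
    (s : EuclideanSpace ℝ (Fin (d + 1)))
    (hsdef : s = append1 (Real.sqrt (1 - u ^ 2) • θ) u) :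
    ‖s‖ = 1 ∧ ∀ x : EuclideanSpace ℝ (Fin d), ⟪x, θ⟫ = t ↔ ⟪invStereo x, s⟫ = u :=
  stmt11_general θ hθ t u hu s hsdef
end

section
/- Let d, d' ≥ 1 and let h : ℝ^d → ℝ^{d'} be continuous and injective. Let μ, ν be Borel probability measures on the unit sphere 𝕊^d ⊂ ℝ^{d+1} with μ({s_n}) = ν({s_n}) = 0, where s_n is the north pole. Extend the stereographic projection φ(s) = s[1:d]/(1 − s_{d+1}) to all of 𝕊^d by setting φ(s_n) = 0. If for every unit vector θ ∈ ℝ^{d'} the pushforward measures of μ and ν under the map s ↦ ⟨h(φ(s)), θ⟩ coincide (as measures on ℝ), then μ = ν. (This is the identifiability underlying the fact that S3W_{H,p} is a metric on probability measures on 𝕊^d ∖ {s_n}: if all one-dimensional slices of the stereographic spherical Radon transform S_H agree, the measures agree.) -/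
/-! Composing the slices with the injective `h` shows that every one-dimensional projection of
the pushforward `(h ∘ φ)_# μ` agrees with that of `(h ∘ φ)_# ν`, so by Cramér–Wold (uniqueness of
characteristic functions) the two pushforwards coincide. Both measures live on
`𝕊^d ∖ {s_n}`, where `h ∘ φ` is continuous and injective: by the Lusin–Souslin theorem it maps
Borel sets to Borel sets, so the pushforward determines the measure. -/

open Real
open scoped RealInnerProductSpace

open MeasureTheory

open Classical in
/-- The stereographic projection extended to all of `𝕊^d` by `φ(s_n) = 0`. -/
noncomputable def stereoExt {d : ℕ} (s : EuclideanSpace ℝ (Fin (d + 1))) : EuclideanSpace ℝ (Fin d) :=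
  if s = northPole d then 0 else stereo s

open Set Metric

namespace MeasureTheory

section CramerWold

variable {E : Type*} [NormedAddCommGroup E] [InnerProductSpace ℝ E] [MeasurableSpace E]

lemma charFun_smul_eq_charFun_map_inner [OpensMeasurableSpace E] (μ : Measure E) (r : ℝ) (u : E) :
    charFun μ (r • u) = charFun (μ.map (⟪·, u⟫)) r := by
  rw [charFun_apply, charFun_apply, integral_map (by fun_prop) (by fun_prop)]
  simp [inner_smul_right, mul_comm]

theorem Measure.ext_of_map_inner_of_norm_eq_one [CompleteSpace E] [SecondCountableTopology E]
    [BorelSpace E] {μ ν : Measure E} [IsProbabilityMeasure μ] [IsProbabilityMeasure ν]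
    (h : ∀ u : E, ‖u‖ = 1 → μ.map (⟪·, u⟫) = ν.map (⟪·, u⟫)) : μ = ν := by
  refine Measure.ext_of_charFun (funext fun t => ?_)
  rcases eq_or_ne t 0 with rfl | ht
  · simp [charFun_zero]
  · have hu : ‖‖t‖⁻¹ • t‖ = 1 := by simpa using norm_smul_inv_norm (𝕜 := ℝ) ht
    rw [← smul_inv_smul₀ (norm_ne_zero_iff.mpr ht) t, charFun_smul_eq_charFun_map_inner,
      charFun_smul_eq_charFun_map_inner, h _ hu]

end CramerWold

theorem Measure.ext_of_map_eq_of_injOn {X Y : Type*} [TopologicalSpace X] [PolishSpace X]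
    [MeasurableSpace X] [BorelSpace X] [TopologicalSpace Y] [T2Space Y] [MeasurableSpace Y]
    [OpensMeasurableSpace Y] {μ ν : Measure X} {F : X → Y} {S : Set X} (hF : Measurable F)
    (hS : MeasurableSet S) (hFc : ContinuousOn F S) (hFi : InjOn F S)
    (hμ : μ Sᶜ = 0) (hν : ν Sᶜ = 0) (h : μ.map F = ν.map F) : μ = ν := by
  ext A hA
  have hB : MeasurableSet (F '' (A ∩ S)) := (hA.inter hS).image_of_continuousOn_injOn
    (hFc.mono inter_subset_right) (hFi.mono inter_subset_right)
  have key : ∀ ρ : Measure X, ρ Sᶜ = 0 → ρ A = ρ.map F (F '' (A ∩ S)) := by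
    intro ρ hρ
    rw [Measure.map_apply hF hB, ← measure_inter_conull (s := F ⁻¹' _) hρ,
      hFi.preimage_image_inter inter_subset_right, measure_inter_conull hρ]
  rw [key μ hμ, key ν hν, h]

end MeasureTheory

section Stereographic

variable {d : ℕ}

@[simp]
lemma stereoProj_apply (s : EuclideanSpace ℝ (Fin (d + 1))) (i : Fin d) :
    stereoProj s i = s i.castSucc := rfl

lemma norm_sq_eq_norm_stereoProj_sq_add_sq (s : EuclideanSpace ℝ (Fin (d + 1))) :
    ‖s‖ ^ 2 = ‖stereoProj s‖ ^ 2 + s (Fin.last d) ^ 2 := by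
  simp [EuclideanSpace.norm_sq_eq, Fin.sum_univ_castSucc]

lemma eq_of_stereoProj_eq {s t : EuclideanSpace ℝ (Fin (d + 1))}
    (hproj : stereoProj s = stereoProj t) (hlast : s (Fin.last d) = t (Fin.last d)) : s = t := by
  ext i
  induction i using Fin.lastCases with
  | last => exact hlast
  | cast j => simpa using congrArg (· j) hproj

lemma stereoProj_northPole : stereoProj (northPole d) = 0 := by
  ext i
  simp [northPole, (Fin.castSucc_lt_last i).ne]

@[simp]
lemma northPole_last : northPole d (Fin.last d) = 1 := by
  simp [northPole]

lemma last_ne_one_of_ne_northPole {s : EuclideanSpace ℝ (Fin (d + 1))} (hs : ‖s‖ = 1)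
    (hn : s ≠ northPole d) : s (Fin.last d) ≠ 1 := by
  intro hlast
  refine hn (eq_of_stereoProj_eq ?_ (by rw [hlast, northPole_last]))
  have h := norm_sq_eq_norm_stereoProj_sq_add_sq s
  rw [hs, hlast] at h
  rw [stereoProj_northPole]
  exact norm_eq_zero.mp (pow_eq_zero_iff two_ne_zero |>.mp (by linarith))

lemma one_sub_last_mul_one_add_norm_stereo_sq {s : EuclideanSpace ℝ (Fin (d + 1))}
    (hs : ‖s‖ = 1) (hlast : s (Fin.last d) ≠ 1) :
    (1 - s (Fin.last d)) * (1 + ‖stereo s‖ ^ 2) = 2 := by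
  have h := norm_sq_eq_norm_stereoProj_sq_add_sq s
  have hne : 1 - s (Fin.last d) ≠ 0 := sub_ne_zero.mpr (Ne.symm hlast)
  rw [hs] at h
  rw [stereo, norm_smul, mul_pow, norm_inv, inv_pow, Real.norm_eq_abs, sq_abs]
  field_simp
  linear_combination -h

lemma stereo_injOn : InjOn (stereo (d := d)) (sphere 0 1 \ {northPole d}) := by
  rintro s ⟨hs, hsn⟩ t ⟨ht, htn⟩ hst
  rw [mem_sphere_zero_iff_norm] at hs ht
  have hs1 := last_ne_one_of_ne_northPole hs hsn
  have ht1 := last_ne_one_of_ne_northPole ht htn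
  have hlast : 1 - s (Fin.last d) = 1 - t (Fin.last d) := by
    have es := one_sub_last_mul_one_add_norm_stereo_sq hs hs1
    rw [hst, ← one_sub_last_mul_one_add_norm_stereo_sq ht ht1] at es
    exact mul_right_cancel₀ (by positivity) es
  have hproj (r : EuclideanSpace ℝ (Fin (d + 1))) (hr : r (Fin.last d) ≠ 1) :
      stereoProj r = (1 - r (Fin.last d)) • stereo r := by
    rw [stereo, smul_inv_smul₀ (sub_ne_zero.mpr (Ne.symm hr))]
  refine eq_of_stereoProj_eq ?_ (by linarith)
  rw [hproj s hs1, hproj t ht1, hlast, hst]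

lemma continuous_stereoProj : Continuous (stereoProj (d := d)) := by
  unfold stereoProj
  fun_prop

lemma stereo_continuousOn : ContinuousOn (stereo (d := d)) {s | s (Fin.last d) ≠ 1} := by
  have hinv : ContinuousOn (fun s : EuclideanSpace ℝ (Fin (d + 1)) => (1 - s (Fin.last d))⁻¹)
      {s | s (Fin.last d) ≠ 1} :=
    (continuousOn_const.sub (by fun_prop)).inv₀ fun s hs => sub_ne_zero.mpr (Ne.symm hs)
  exact hinv.smul continuous_stereoProj.continuousOn

lemma measurable_stereoExt : Measurable (stereoExt (d := d)) := by
  unfold stereoExt stereo stereoProj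
  exact Measurable.ite (measurableSet_singleton _) measurable_const (by fun_prop)

lemma stereoExt_eqOn : EqOn (stereoExt (d := d)) stereo {northPole d}ᶜ :=
  fun _ hs => if_neg hs

lemma stereoExt_injOn : InjOn (stereoExt (d := d)) (sphere 0 1 \ {northPole d}) :=
  stereo_injOn.congr (stereoExt_eqOn.mono (sdiff_subset_compl _ _)).symm

lemma stereoExt_continuousOn : ContinuousOn (stereoExt (d := d)) (sphere 0 1 \ {northPole d}) :=
  (stereo_continuousOn.mono fun _ hs =>
    last_ne_one_of_ne_northPole (mem_sphere_zero_iff_norm.mp hs.1) hs.2).congr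
    (stereoExt_eqOn.mono (sdiff_subset_compl _ _))

end Stereographic

theorem stmt16_general {d d' : ℕ}
    (h : EuclideanSpace ℝ (Fin d) → EuclideanSpace ℝ (Fin d'))
    (hcont : Continuous h) (hinj : Function.Injective h)
    (μ ν : Measure (EuclideanSpace ℝ (Fin (d + 1))))
    [IsProbabilityMeasure μ] [IsProbabilityMeasure ν]
    (hμsph : μ (Metric.sphere (0 : EuclideanSpace ℝ (Fin (d + 1))) 1)ᶜ = 0)
    (hνsph : ν (Metric.sphere (0 : EuclideanSpace ℝ (Fin (d + 1))) 1)ᶜ = 0)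
    (hμn : μ {northPole d} = 0) (hνn : ν {northPole d} = 0)
    (hslices : ∀ θ : EuclideanSpace ℝ (Fin d'), ‖θ‖ = 1 →
      Measure.map (fun s => ⟪h (stereoExt s), θ⟫) μ =
        Measure.map (fun s => ⟪h (stereoExt s), θ⟫) ν) :
    μ = ν := by
  have hF : Measurable fun s => h (stereoExt s) := hcont.measurable.comp measurable_stereoExt
  have hnull (ρ : Measure (EuclideanSpace ℝ (Fin (d + 1)))) (hsph : ρ (sphere 0 1)ᶜ = 0)
      (hn : ρ {northPole d} = 0) : ρ (sphere 0 1 \ {northPole d})ᶜ = 0 := by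
    rw [Set.compl_sdiff]
    exact measure_union_null hn hsph
  refine Measure.ext_of_map_eq_of_injOn hF
    (isClosed_sphere.measurableSet.diff (measurableSet_singleton _))
    (hcont.comp_continuousOn stereoExt_continuousOn) (hinj.comp_injOn stereoExt_injOn)
    (hnull μ hμsph hμn) (hnull ν hνsph hνn) ?_
  have := Measure.isProbabilityMeasure_map (μ := μ) hF.aemeasurable
  have := Measure.isProbabilityMeasure_map (μ := ν) hF.aemeasurable
  refine Measure.ext_of_map_inner_of_norm_eq_one fun θ hθ => ?_
  rw [Measure.map_map (by fun_prop) hF, Measure.map_map (by fun_prop) hF]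
  exact hslices θ hθ

/-- let `h : ℝ^d → ℝ^{d'}` be continuous and injective, and let `μ, ν` be
Borel probability measures on the unit sphere `𝕊^d ⊂ ℝ^{d+1}` giving no mass to the
north pole. If for every unit vector `θ ∈ ℝ^{d'}` the pushforwards of `μ` and `ν` under
`s ↦ ⟨h(φ(s)), θ⟩` coincide, then `μ = ν`. -/
theorem stmt16 {d d' : ℕ} (hd : 1 ≤ d) (hd' : 1 ≤ d')
    (h : EuclideanSpace ℝ (Fin d) → EuclideanSpace ℝ (Fin d'))
    (hcont : Continuous h) (hinj : Function.Injective h)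
    (μ ν : Measure (EuclideanSpace ℝ (Fin (d + 1))))
    [IsProbabilityMeasure μ] [IsProbabilityMeasure ν]
    (hμsph : μ (Metric.sphere (0 : EuclideanSpace ℝ (Fin (d + 1))) 1)ᶜ = 0)
    (hνsph : ν (Metric.sphere (0 : EuclideanSpace ℝ (Fin (d + 1))) 1)ᶜ = 0)
    (hμn : μ {northPole d} = 0) (hνn : ν {northPole d} = 0)
    (hslices : ∀ θ : EuclideanSpace ℝ (Fin d'), ‖θ‖ = 1 →
      Measure.map (fun s => ⟪h (stereoExt s), θ⟫) μ =
        Measure.map (fun s => ⟪h (stereoExt s), θ⟫) ν) :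
    μ = ν :=
  stmt16_general h hcont hinj μ ν hμsph hνsph hμn hνn hslices
end
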